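/- Let λ ∈ F with λ + λ̄ = 1, let a ∈ F with a ≠ 0, and let c ∈ {0,1} ⊆ F be the image of the natural number m in F (so c = 0 if m is even and c = 1 if m is odd). Then ∑_{x ∈ F, Tr_n(x) = 0} ε(Tr_n(λ·x^(2^m+1)) + Tr_n(a·x)) equals −2^m if Tr_n(a) = c and Tr_m(a·ā) = 0; equals 2^m if Tr_n(a) = c and Tr_m(a·ā) = 1; and equals 0 if Tr_n(a) ≠ c. -/

import Mathlib

open Finset

/-- Absolute trace-style sum `Tr_n : F → F` for `n = 2m`. -/
def trN (m : ℕ) {F : Type*} [Field F] (x : F) : F :=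
  ∑ i ∈ Finset.range (2 * m), x ^ (2 ^ i)

/-- Trace-style sum `Tr_m : F → F` (meant for elements of the subfield `K`). -/
def trM (m : ℕ) {F : Type*} [Field F] (x : F) : F :=
  ∑ i ∈ Finset.range m, x ^ (2 ^ i)

/-- `ε(0) = 1`, `ε(t) = -1` for `t ≠ 0`. -/
def eps {F : Type*} [Field F] [DecidableEq F] (t : F) : ℤ :=
  if t = 0 then 1 else -1

/-- Kloosterman sum `k_m(μ) = ∑_{x ∈ K, x ≠ 0} χ_m(x + μ x⁻¹)`. -/
def klooM (m : ℕ) {F : Type*} [Field F] [Fintype F] [DecidableEq F] (μ : F) : ℤ :=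
  ∑ x ∈ Finset.univ.filter (fun x : F => x ^ (2 ^ m) = x ∧ x ≠ 0),
    eps (trM m (x + μ * x⁻¹))

/-- Kloosterman sum over the big field: `k_n(μ) = ∑_{x ∈ F, x ≠ 0} χ_n(x + μ x⁻¹)`. -/
def klooN (m : ℕ) {F : Type*} [Field F] [Fintype F] [DecidableEq F] (μ : F) : ℤ :=
  ∑ x ∈ Finset.univ.filter (fun x : F => x ≠ 0), eps (trN m (x + μ * x⁻¹))

/-- Walsh transform of `h : F → F` (with values in `{0,1}`) at `a`. -/
def walsh (m : ℕ) {F : Type*} [Field F] [Fintype F] [DecidableEq F] (h : F → F) (a : F) : ℤ :=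
  ∑ x : F, eps (h x + trN m (a * x))

/-- The Boolean function `f_{λ,μ}(x) = Tr_n(λ x^{2^m+1}) + Tr_n(x)·Tr_n(μ x^{2^m-1})`. -/
def fFun (m : ℕ) {F : Type*} [Field F] (l μ : F) : F → F :=
  fun x => trN m (l * x ^ (2 ^ m + 1)) + trN m x * trN m (μ * x ^ (2 ^ m - 1))

/-- The Boolean function
`g_{λ,μ}(x) = (1 + Tr_n(x))·Tr_n(λ x^{2^m+1}) + Tr_n(x)·Tr_n(μ x^{2^m-1})`. -/
def gFun (m : ℕ) {F : Type*} [Field F] (l μ : F) : F → F :=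
  fun x => (1 + trN m x) * trN m (l * x ^ (2 ^ m + 1)) +
    trN m x * trN m (μ * x ^ (2 ^ m - 1))


/-!
Write `q = 2 ^ m`, `x̄ = x ^ q` and `N x = x ^ (q + 1) = x x̄ ∈ K`. Since `λ + λ̄ = 1`,
`Tr_n (λ N x) = Tr_m (N x)`, and completing the norm, `N x + a x + ā x̄ = N (x + ā) + N a`; so the
summand is `ε (Tr_m N (x + ā)) ε (Tr_m N a)`, and translating by `ā` the sum becomes
`ε (Tr_m N a)` times the sum of `ε (Tr_m N y)` over `Tr_n y = Tr_n a`.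

The norm maps `F*` onto `K*` exactly `(q + 1)`-to-one and `Tr_m` is balanced on `K`, so
`∑ y, ε (Tr_m N y) = 1 - (q + 1) = -q`. From `N (y + 1) = N y + y + ȳ + 1` we get
`ε (Tr_n y) ε (Tr_m N y) = ε m ε (Tr_m N (y + 1))`, hence `∑ y, ε (Tr_n y) ε (Tr_m N y) = -ε m q`.
Adding and subtracting, the sum of `ε (Tr_m N y)` over `Tr_n y = c` is `-q` if `c = m`, else `0`.
-/

open Polynomial

section NormMap

variable {F : Type*} [Field F] [Fintype F] {q : ℕ}

theorem one_lt_of_card_eq_sq (hcard : Fintype.card F = q ^ 2) : 1 < q := by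
  have h := Fintype.one_lt_card (α := F)
  rw [hcard] at h
  by_contra! hq
  interval_cases q <;> simp at h

theorem pow_pow_eq_self_of_card_eq_sq (hcard : Fintype.card F = q ^ 2) (x : F) :
    (x ^ q) ^ q = x := by
  rw [← pow_mul, ← sq, ← hcard, FiniteField.pow_card]

theorem pow_succ_pow_eq_self (hcard : Fintype.card F = q ^ 2) (x : F) :
    (x ^ (q + 1)) ^ q = x ^ (q + 1) := by
  rw [← pow_mul, mul_comm, pow_mul, pow_succ, pow_pow_eq_self_of_card_eq_sq hcard, ← pow_succ']

variable [DecidableEq F]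

variable (F) in
/-- For `q = 2 ^ m` this is the subfield `K`. -/
def powFixed (q : ℕ) : Finset F := univ.filter fun u => u ^ q = u

theorem mem_powFixed {u : F} : u ∈ powFixed F q ↔ u ^ q = u := by
  simp [powFixed]

theorem zero_mem_powFixed (hq : q ≠ 0) : (0 : F) ∈ powFixed F q :=
  mem_powFixed.2 (zero_pow hq)

theorem pow_succ_mem_powFixed (hcard : Fintype.card F = q ^ 2) (x : F) :
    x ^ (q + 1) ∈ powFixed F q :=
  mem_powFixed.2 (pow_succ_pow_eq_self hcard x)

theorem card_powFixed_le (hq : 1 < q) : #(powFixed F q) ≤ q := by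
  calc #(powFixed F q) ≤ (X ^ q - X : F[X]).natDegree := by
        refine card_le_degree_of_subset_roots fun u hu => ?_
        rw [mem_roots (FiniteField.X_pow_card_sub_X_ne_zero F hq), IsRoot.def]
        simp [mem_powFixed.1 hu]
    _ = q := FiniteField.X_pow_card_sub_X_natDegree_eq F hq

theorem card_filter_pow_eq_le {n : ℕ} (hn : 0 < n) (u : F) :
    #(univ.filter fun x : F => x ^ n = u) ≤ n :=
  calc _ ≤ #(nthRootsFinset n u) :=
        card_le_card fun x hx => (mem_nthRootsFinset hn u).2 (mem_filter.1 hx).2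
    _ ≤ n := by
        classical
        rw [nthRootsFinset_def]
        exact (Multiset.toFinset_card_le _).trans (card_nthRoots n u)

/-- The `q ^ 2` elements of `F` lie in the fibres of `x ↦ x ^ (q + 1)` over `K`: the fibre
over `0` is `{0}`, the others have at most `q + 1` points and `#K ≤ q`, so every bound is
attained. -/
theorem card_powFixed_eq_and_card_fiber (hcard : Fintype.card F = q ^ 2) :
    #(powFixed F q) = q ∧
      ∀ u ∈ (powFixed F q).erase 0, #(univ.filter fun x : F => x ^ (q + 1) = u) = q + 1 := by
  set K := powFixed F q
  set fib := fun u : F => #(univ.filter fun x : F => x ^ (q + 1) = u)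
  have hq := one_lt_of_card_eq_sq hcard
  have h0 : (0 : F) ∈ K := zero_mem_powFixed (by omega)
  have hfib0 : fib 0 = 1 := by
    simp [fib, pow_eq_zero_iff, filter_eq']
  have htotal : fib 0 + ∑ u ∈ K.erase 0, fib u = q ^ 2 := by
    rw [add_sum_erase _ _ h0, ← hcard, ← card_univ]
    exact (card_eq_sum_card_fiberwise fun x _ => pow_succ_mem_powFixed hcard x).symm
  have hle : ∀ u ∈ K.erase 0, fib u ≤ q + 1 := fun u _ => card_filter_pow_eq_le (by omega) u
  have hsum_le : ∑ u ∈ K.erase 0, fib u ≤ #(K.erase 0) * (q + 1) :=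
    sum_le_card_nsmul _ _ _ hle
  have hK : #(K.erase 0) + 1 ≤ q := (card_erase_add_one h0).symm ▸ card_powFixed_le hq
  have hKeq : #(K.erase 0) + 1 = q := by nlinarith
  refine ⟨by rw [← card_erase_add_one h0, hKeq], ?_⟩
  refine (sum_eq_sum_iff_of_le hle).1 ?_
  rw [sum_const, smul_eq_mul]
  nlinarith

theorem sum_comp_pow_succ {M : Type*} [AddCommMonoid M] (hcard : Fintype.card F = q ^ 2)
    (f : F → M) :
    ∑ x, f (x ^ (q + 1)) = f 0 + (q + 1) • ∑ u ∈ (powFixed F q).erase 0, f u := by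
  obtain ⟨-, hfib⟩ := card_powFixed_eq_and_card_fiber hcard
  have h0 : (0 : F) ∈ powFixed F q := zero_mem_powFixed (one_lt_of_card_eq_sq hcard).ne_bot
  rw [← sum_fiberwise_of_maps_to' (fun x _ => pow_succ_mem_powFixed hcard x),
    ← add_sum_erase _ _ h0, smul_sum]
  congr 1
  · simp [pow_eq_zero_iff, filter_eq']
  · exact sum_congr rfl fun u hu => by rw [sum_const, hfib u hu]

end NormMap

section Trace

variable {F : Type*} [Field F]

theorem trM_zero (m : ℕ) : trM m (0 : F) = 0 := by
  simp [trM]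

theorem trM_one (m : ℕ) : trM m (1 : F) = m := by
  simp [trM]

theorem trN_eq_trM_add_trM_pow (m : ℕ) (x : F) : trN m x = trM m x + trM m (x ^ 2 ^ m) := by
  rw [trN, trM, trM, two_mul, sum_range_add]
  simp only [pow_add, pow_mul]

theorem exists_trM_ne_zero {m : ℕ} (hm : 0 < m) {K : Finset F} (hK : 2 ^ (m - 1) < #K) :
    ∃ u ∈ K, trM m u ≠ 0 := by
  by_contra! h
  set p : F[X] := ∑ i ∈ range m, X ^ 2 ^ i
  have hp : p ≠ 0 := by
    have hcoeff : p.coeff 1 = 1 := by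
      simp [p, coeff_X_pow, eq_comm (a := 1), hm]
    exact fun h => by simp [h] at hcoeff
  have hdeg : p.natDegree ≤ 2 ^ (m - 1) :=
    natDegree_sum_le_of_forall_le _ _ fun i hi => by
      rw [natDegree_X_pow]
      exact Nat.pow_le_pow_right two_pos (by simp at hi; omega)
  have hroots : #K ≤ p.natDegree := card_le_degree_of_subset_roots fun u hu => by
    rw [mem_roots hp, IsRoot.def, eval_finsetSum]
    simpa [trM] using h u hu
  omega

variable [CharP F 2]

theorem trM_add (m : ℕ) (x y : F) : trM m (x + y) = trM m x + trM m y := by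
  simp only [trM, add_pow_char_pow, sum_add_distrib]

theorem trN_add (m : ℕ) (x y : F) : trN m (x + y) = trN m x + trN m y :=
  trM_add (2 * m) x y

theorem trM_eq_zero_or_one {m : ℕ} {x : F} (hx : x ^ 2 ^ m = x) :
    trM m x = 0 ∨ trM m x = 1 := by
  -- squaring permutes the terms of the sum cyclically, because `x ^ 2 ^ m = x`
  rw [← IsIdempotentElem.iff_eq_zero_or_one, IsIdempotentElem, ← sq, trM, sum_pow_char]
  have h := (sum_range_succ' (fun i => x ^ 2 ^ i) m).symm.trans (sum_range_succ _ m)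
  simp only [pow_zero, pow_one, hx, add_left_inj] at h
  simpa [← pow_mul, ← pow_succ] using h

theorem one_add_eps_add [DecidableEq F] (s t : F) : 1 + eps (s + t) = if s = t then 2 else 0 := by
  simp only [eps, CharTwo.add_eq_zero]
  split_ifs <;> norm_num

theorem eps_add_of_mem [DecidableEq F] {s t : F} (hs : s = 0 ∨ s = 1) (ht : t = 0 ∨ t = 1) :
    eps (s + t) = eps s * eps t := by
  rcases hs with rfl | rfl <;> rcases ht with rfl | rfl <;> simp [eps, CharTwo.add_self_eq_zero]

theorem sum_eps_trM_powFixed [Fintype F] [DecidableEq F] {m : ℕ} (hm : 0 < m)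
    (hK : #(powFixed F (2 ^ m)) = 2 ^ m) : ∑ u ∈ powFixed F (2 ^ m), eps (trM m u) = 0 := by
  obtain ⟨u₀, hu₀, htr⟩ :=
    exists_trM_ne_zero hm (hK ▸ Nat.pow_lt_pow_right one_lt_two (Nat.sub_lt hm one_pos))
  have htr₁ : trM m u₀ = 1 := (trM_eq_zero_or_one (mem_powFixed.1 hu₀)).resolve_left htr
  refine sum_involution (fun u _ => u + u₀) (fun u hu => ?_) (fun u _ _ => ?_)
    (fun u hu => ?_) (fun u _ => CharTwo.add_cancel_right u u₀)
  · rw [trM_add, htr₁, eps_add_of_mem (trM_eq_zero_or_one (mem_powFixed.1 hu)) (Or.inr rfl)]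
    simp [eps]
  · exact fun h => htr (by simpa [trM_zero] using congrArg (trM m) (add_eq_left.1 h))
  · rw [mem_powFixed, add_pow_char_pow, mem_powFixed.1 hu, mem_powFixed.1 hu₀]

end Trace

section FiniteField

variable {F : Type*} [Field F] [Fintype F] {m : ℕ}

theorem trN_pow_two_pow (hcard : Fintype.card F = 2 ^ (2 * m)) (x : F) :
    trN m (x ^ 2 ^ m) = trN m x := by
  rw [trN_eq_trM_add_trM_pow, trN_eq_trM_add_trM_pow,
    pow_pow_eq_self_of_card_eq_sq (hcard.trans (pow_mul' 2 2 m)), add_comm]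

variable [CharP F 2]

theorem trN_mul_pow_succ (hcard : Fintype.card F = 2 ^ (2 * m)) {l : F}
    (hl : l + l ^ 2 ^ m = 1) (x : F) : trN m (l * x ^ (2 ^ m + 1)) = trM m (x ^ (2 ^ m + 1)) := by
  rw [trN_eq_trM_add_trM_pow, mul_pow, pow_succ_pow_eq_self (hcard.trans (pow_mul' 2 2 m)),
    ← trM_add, ← add_mul, hl, one_mul]

theorem trN_eq_zero_or_one (hcard : Fintype.card F = 2 ^ (2 * m)) (x : F) :
    trN m x = 0 ∨ trN m x = 1 :=
  trM_eq_zero_or_one (hcard ▸ FiniteField.pow_card x)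

theorem trM_pow_succ_eq_zero_or_one (hcard : Fintype.card F = 2 ^ (2 * m)) (x : F) :
    trM m (x ^ (2 ^ m + 1)) = 0 ∨ trM m (x ^ (2 ^ m + 1)) = 1 :=
  trM_eq_zero_or_one (pow_succ_pow_eq_self (hcard.trans (pow_mul' 2 2 m)) x)

variable [DecidableEq F]

theorem sum_eps_trM_pow_succ (hcard : Fintype.card F = 2 ^ (2 * m)) :
    ∑ x : F, eps (trM m (x ^ (2 ^ m + 1))) = -2 ^ m := by
  have hsq := hcard.trans (pow_mul' 2 2 m)
  have hm : 0 < m := Nat.pos_of_ne_zero (Nat.one_lt_two_pow_iff.1 (one_lt_of_card_eq_sq hsq))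
  have hK := sum_eps_trM_powFixed hm (card_powFixed_eq_and_card_fiber hsq).1
  rw [← add_sum_erase _ _ (zero_mem_powFixed (pow_ne_zero m two_ne_zero))] at hK
  refine (sum_comp_pow_succ hsq fun u => eps (trM m u)).trans ?_
  simp only [trM_zero, eps, if_true] at hK ⊢
  rw [eq_neg_add_of_add_eq hK, nsmul_eq_mul]
  push_cast
  ring

theorem sum_eps_trN_mul_eps_trM_pow_succ (hcard : Fintype.card F = 2 ^ (2 * m)) :
    ∑ x : F, eps (trN m x) * eps (trM m (x ^ (2 ^ m + 1))) = -(eps (m : F) * 2 ^ m) := by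
  have hshift : ∀ x : F, eps (trN m x) * eps (trM m (x ^ (2 ^ m + 1)))
      = eps (m : F) * eps (trM m ((x + 1) ^ (2 ^ m + 1))) := by
    intro x
    have hnorm : trM m ((x + 1) ^ (2 ^ m + 1)) = trM m (x ^ (2 ^ m + 1)) + trN m x + m := by
      rw [pow_succ, add_pow_char_pow, one_pow, trN_eq_trM_add_trM_pow, ← trM_one, ← trM_add,
        ← trM_add, ← trM_add]
      ring_nf
    rw [mul_comm, ← eps_add_of_mem (trM_pow_succ_eq_zero_or_one hcard x)
      (trN_eq_zero_or_one hcard x), mul_comm, ← eps_add_of_mem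
      (trM_pow_succ_eq_zero_or_one hcard (x + 1)) (CharTwo.natCast_cases F m), hnorm]
    congr 1
    linear_combination (-(m : F)) * CharTwo.two_eq_zero (R := F)
  have htranslate : ∑ x : F, eps (trM m ((x + 1) ^ (2 ^ m + 1)))
      = ∑ x : F, eps (trM m (x ^ (2 ^ m + 1))) :=
    Equiv.sum_comp (Equiv.addRight (1 : F)) fun x => eps (trM m (x ^ (2 ^ m + 1)))
  rw [sum_congr rfl fun x _ => hshift x, ← mul_sum, htranslate, sum_eps_trM_pow_succ hcard,
    mul_neg]

theorem sum_filter_trN_eq_eps_trM_pow_succ (hcard : Fintype.card F = 2 ^ (2 * m)) {c : F}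
    (hc : c = 0 ∨ c = 1) :
    ∑ x ∈ univ.filter (fun x : F => trN m x = c), eps (trM m (x ^ (2 ^ m + 1)))
      = if c = m then -2 ^ m else 0 := by
  have h2 : 2 * ∑ x ∈ univ.filter (fun x : F => trN m x = c), eps (trM m (x ^ (2 ^ m + 1)))
      = -2 ^ m * (1 + eps (c + m)) := by
    calc _ = ∑ x : F, (1 + eps (trN m x + c)) * eps (trM m (x ^ (2 ^ m + 1))) := by
          rw [sum_filter, mul_sum]
          refine sum_congr rfl fun x _ => ?_
          rw [one_add_eps_add]
          split_ifs <;> ring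
      _ = ∑ x : F, eps (trM m (x ^ (2 ^ m + 1)))
          + eps c * ∑ x : F, eps (trN m x) * eps (trM m (x ^ (2 ^ m + 1))) := by
          rw [mul_sum, ← sum_add_distrib]
          refine sum_congr rfl fun x _ => ?_
          rw [eps_add_of_mem (trN_eq_zero_or_one hcard x) hc]
          ring
      _ = _ := by
          rw [sum_eps_trM_pow_succ hcard, sum_eps_trN_mul_eps_trM_pow_succ hcard,
            eps_add_of_mem hc (CharTwo.natCast_cases F m)]
          ring
  rw [one_add_eps_add] at h2
  split_ifs at h2 ⊢ <;> linarith

theorem eps_trN_mul_pow_succ_add_trN_mul (hcard : Fintype.card F = 2 ^ (2 * m)) {l : F}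
    (hl : l + l ^ 2 ^ m = 1) (a x : F) :
    eps (trN m (l * x ^ (2 ^ m + 1)) + trN m (a * x))
      = eps (trM m ((x + a ^ 2 ^ m) ^ (2 ^ m + 1))) * eps (trM m (a ^ (2 ^ m + 1))) := by
  have hsum : trN m (l * x ^ (2 ^ m + 1)) + trN m (a * x)
      = trM m ((x + a ^ 2 ^ m) ^ (2 ^ m + 1)) + trM m (a ^ (2 ^ m + 1)) := by
    rw [trN_mul_pow_succ hcard hl, trN_eq_trM_add_trM_pow, mul_pow]
    simp only [← trM_add]
    congr 1
    rw [pow_succ (x + _), add_pow_char_pow, pow_pow_eq_self_of_card_eq_sq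
      (hcard.trans (pow_mul' 2 2 m)), pow_succ x, pow_succ a]
    linear_combination (-(a ^ 2 ^ m * a)) * CharTwo.two_eq_zero (R := F)
  rw [hsum, eps_add_of_mem (trM_pow_succ_eq_zero_or_one hcard _)
    (trM_pow_succ_eq_zero_or_one hcard a)]

theorem sum_filter_trN_eq_zero_eps_trN_add_trN (hcard : Fintype.card F = 2 ^ (2 * m)) {l : F}
    (hl : l + l ^ 2 ^ m = 1) (a : F) :
    ∑ x ∈ univ.filter (fun x : F => trN m x = 0),
        eps (trN m (l * x ^ (2 ^ m + 1)) + trN m (a * x))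
      = eps (trM m (a ^ (2 ^ m + 1))) * if trN m a = m then -2 ^ m else 0 := by
  rw [sum_congr rfl fun x _ => eps_trN_mul_pow_succ_add_trN_mul hcard hl a x, ← sum_mul,
    mul_comm, ← sum_filter_trN_eq_eps_trM_pow_succ hcard (trN_eq_zero_or_one hcard a)]
  congr 1
  refine sum_nbij' (· + a ^ 2 ^ m) (· + a ^ 2 ^ m) (fun x hx => ?_) (fun y hy => ?_)
    (fun x _ => CharTwo.add_cancel_right x _) (fun y _ => CharTwo.add_cancel_right y _)
    (fun x _ => ?_)
  · simp_all [trN_add, trN_pow_two_pow hcard]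
  · simp_all [trN_add, trN_pow_two_pow hcard, CharTwo.add_self_eq_zero]
  · rfl

end FiniteField

theorem stmt5_general (m : ℕ) (F : Type*) [Field F] [Fintype F] [DecidableEq F]
    (hcard : Fintype.card F = 2 ^ (2 * m))
    (l : F) (hl : l + l ^ (2 ^ m) = 1) (a : F) :
    (trN m a = (m : F) → trM m (a * a ^ (2 ^ m)) = 0 →
      ∑ x ∈ Finset.univ.filter (fun x : F => trN m x = 0),
        eps (trN m (l * x ^ (2 ^ m + 1)) + trN m (a * x)) = -(2 ^ m : ℤ)) ∧
    (trN m a = (m : F) → trM m (a * a ^ (2 ^ m)) = 1 →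
      ∑ x ∈ Finset.univ.filter (fun x : F => trN m x = 0),
        eps (trN m (l * x ^ (2 ^ m + 1)) + trN m (a * x)) = (2 ^ m : ℤ)) ∧
    (trN m a ≠ (m : F) →
      ∑ x ∈ Finset.univ.filter (fun x : F => trN m x = 0),
        eps (trN m (l * x ^ (2 ^ m + 1)) + trN m (a * x)) = 0) := by
  have : CharP F 2 := charP_of_card_eq_prime_pow hcard
  have hsum := sum_filter_trN_eq_zero_eps_trN_add_trN hcard hl a
  rw [pow_succ'] at hsum
  refine ⟨fun hc htr => ?_, fun hc htr => ?_, fun hc => ?_⟩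
  · rw [hsum, if_pos hc, htr]
    simp [eps]
  · rw [hsum, if_pos hc, htr]
    simp [eps]
  · rw [hsum, if_neg hc, mul_zero]

theorem stmt5 (m : ℕ) (hm : 0 < m) (F : Type*) [Field F] [Fintype F] [DecidableEq F]
    (hcard : Fintype.card F = 2 ^ (2 * m))
    (l : F) (hl : l + l ^ (2 ^ m) = 1) (a : F) (ha : a ≠ 0) :
    (trN m a = (m : F) → trM m (a * a ^ (2 ^ m)) = 0 →
      ∑ x ∈ Finset.univ.filter (fun x : F => trN m x = 0),
        eps (trN m (l * x ^ (2 ^ m + 1)) + trN m (a * x)) = -(2 ^ m : ℤ)) ∧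
    (trN m a = (m : F) → trM m (a * a ^ (2 ^ m)) = 1 →
      ∑ x ∈ Finset.univ.filter (fun x : F => trN m x = 0),
        eps (trN m (l * x ^ (2 ^ m + 1)) + trN m (a * x)) = (2 ^ m : ℤ)) ∧
    (trN m a ≠ (m : F) →
      ∑ x ∈ Finset.univ.filter (fun x : F => trN m x = 0),
        eps (trN m (l * x ^ (2 ^ m + 1)) + trN m (a * x)) = 0) :=
  stmt5_general m F hcard l hl a
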